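/- arXiv:2204.11277 — 2 statements merged into one kernel-verified Lean document; each statement's English description precedes it below -/
import Mathlib

section
/- Let m ≥ 2 and σ ≥ d/2 − 2/(m−1) with σ < d/2 − 2/m. Then there exists C > 0 depending only on d such that for every k_m ∈ ℤ^d, Σ over (k₁,…,k_{m−1}) ∈ (ℤ_I^d)^{m−1} with |k_j| ≤ |k_m| for all j of ∏_{j=1}^{m−1} ⟨k_j⟩^{−2(σ+2/m)} ⟨k_m⟩^{−4/m} ≤ C^{m−1} (d − 2(σ+2/m))^{−(m−1)} ⟨k_m⟩^{(m−1)(d−2σ_c)−4}, where σ_c = d/2 − 2/(m−1); in particular this quantity is bounded by C^{m−1}|d − 2(σ+2/m)|^{−(m−1)} since (m−1)(d−2σ_c) − 4 ≤ 0. -/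
noncomputable section

abbrev Vd (d : ℕ) := EuclideanSpace ℝ (Fin d)

def toV {d : ℕ} (k : Fin d → ℤ) : Vd d :=
  (WithLp.equiv 2 (Fin d → ℝ)).symm fun i => (k i : ℝ)

/-- ℓ¹ norm of a lattice point. -/
def l1Z {d : ℕ} (k : Fin d → ℤ) : ℝ := ∑ i, |(k i : ℝ)|

/-- Japanese bracket ⟨k⟩. -/
def japZ {d : ℕ} (k : Fin d → ℤ) : ℝ := Real.sqrt (1 + ‖toV k‖ ^ 2)

/-- The region of summation: tuples (k₁,…,k_{m−1}) of lattice points in the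
first octant with |k_j| ≤ |k_m| for all j. -/
def region (d n : ℕ) (km : Fin d → ℤ) : Set (Fin n → Fin d → ℤ) :=
  {kk | (∀ j i, 0 ≤ kk j i) ∧ ∀ j, l1Z (kk j) ≤ l1Z km}

/-!
The sum factorises: the region is the `(m-1)`-fold power of the set of octant lattice points `k`
with `|k|₁ ≤ |k_m|₁`, so it equals `(∑ₖ ⟨k⟩^{β-d})^{m-1} ⟨k_m⟩^{-4/m}` with
`β = d - 2(σ + 2/m) ∈ (0, 2]`. The shell `|k|₁ = n` has at most `(n+1)^{d-1}` points, on which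
`⟨k⟩ ≍ n + 1`, so the single sum is `≲ ∑_{n ≤ |k_m|₁} (n+1)^{β-1} ≲ ⟨k_m⟩^β / β`. The total is
therefore `≲ (C/β)^{m-1} ⟨k_m⟩^{(m-1)β - 4/m}`, and the lower bound on `σ` says exactly that
`(m-1)β ≤ 4/m`.
-/

open Finset Real

section BracketBounds

variable {d : ℕ}

lemma japZ_sq (k : Fin d → ℤ) : japZ k ^ 2 = 1 + ∑ i, (k i : ℝ) ^ 2 := by
  rw [japZ, sq_sqrt (by positivity), toV, EuclideanSpace.norm_eq, sq_sqrt (by positivity)]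
  simp [sq_abs]

lemma one_le_japZ (k : Fin d → ℤ) : 1 ≤ japZ k :=
  one_le_sqrt.2 (le_add_of_nonneg_right (by positivity))

lemma japZ_pos (k : Fin d → ℤ) : 0 < japZ k := one_pos.trans_le (one_le_japZ k)

lemma l1Z_eq_natCast (k : Fin d → ℤ) : l1Z k = ((∑ i, (k i).natAbs : ℕ) : ℝ) := by
  simp [l1Z, Nat.cast_natAbs]

lemma japZ_le_l1Z_add_one (k : Fin d → ℤ) : japZ k ≤ l1Z k + 1 := by
  have hl1 : 0 ≤ l1Z k := sum_nonneg fun i _ => abs_nonneg _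
  have hl2 : ∑ i, (k i : ℝ) ^ 2 ≤ l1Z k ^ 2 := by
    simpa [l1Z, sq_abs] using sum_sq_le_sq_sum_of_nonneg (s := univ)
      (fun i _ => abs_nonneg ((k i : ℝ)))
  rw [← abs_of_pos (japZ_pos k), ← abs_of_pos (by positivity : 0 < l1Z k + 1)]
  refine sq_le_sq.1 ?_
  rw [japZ_sq]
  nlinarith

lemma l1Z_add_one_le (k : Fin d → ℤ) : l1Z k + 1 ≤ (√d + 1) * japZ k := by
  have hcs : l1Z k ^ 2 ≤ d * ∑ i, (k i : ℝ) ^ 2 := by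
    simpa [l1Z, sq_abs] using sq_sum_le_card_mul_sum_sq (s := univ) (f := fun i => |(k i : ℝ)|)
  have hl1 : l1Z k ≤ √d * japZ k := by
    rw [← sqrt_sq (japZ_pos k).le, ← sqrt_mul (Nat.cast_nonneg d), japZ_sq]
    refine le_sqrt_of_sq_le (hcs.trans ?_)
    gcongr
    linarith
  linarith [one_le_japZ k]

end BracketBounds

section PowerSums

lemma mul_rpow_sub_one_le_rpow_sub_rpow {β x : ℝ} (hβ0 : 0 ≤ β) (hβ1 : β ≤ 1) (hx : 0 ≤ x) :
    β * (x + 1) ^ (β - 1) ≤ (x + 1) ^ β - x ^ β := by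
  have hx1 : 0 < x + 1 := by linarith
  have hbern : (1 + -(x + 1)⁻¹) ^ β ≤ 1 + β * -(x + 1)⁻¹ :=
    rpow_one_add_le_one_add_mul_self (by simpa using inv_le_one_of_one_le₀ (by linarith)) hβ0 hβ1
  have hfrac : 1 + -(x + 1)⁻¹ = x / (x + 1) := by field_simp; ring
  rw [hfrac, div_rpow hx hx1.le, div_le_iff₀ (rpow_pos_of_pos hx1 β)] at hbern
  rw [rpow_sub_one hx1.ne']
  have : (1 + β * -(x + 1)⁻¹) * (x + 1) ^ β = (x + 1) ^ β - β * ((x + 1) ^ β / (x + 1)) := by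
    ring
  linarith

lemma sum_range_rpow_le_of_le_one {β : ℝ} (hβ0 : 0 < β) (hβ1 : β ≤ 1) (N : ℕ) :
    ∑ n ∈ range N, ((n : ℝ) + 1) ^ (β - 1) ≤ N ^ β / β := by
  rw [le_div_iff₀ hβ0, sum_mul]
  calc ∑ n ∈ range N, ((n : ℝ) + 1) ^ (β - 1) * β
      ≤ ∑ n ∈ range N, (((n + 1 : ℕ) : ℝ) ^ β - (n : ℝ) ^ β) := by
        gcongr with n
        push_cast
        linarith [mul_rpow_sub_one_le_rpow_sub_rpow hβ0.le hβ1 n.cast_nonneg]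
    _ = N ^ β := by
        rw [sum_range_sub (fun n : ℕ => (n : ℝ) ^ β), Nat.cast_zero, zero_rpow hβ0.ne', sub_zero]

lemma sum_range_rpow_le {β : ℝ} (hβ0 : 0 < β) (hβ2 : β ≤ 2) (N : ℕ) :
    ∑ n ∈ range N, ((n : ℝ) + 1) ^ (β - 1) ≤ 2 / β * N ^ β := by
  rcases le_or_gt β 1 with hβ1 | hβ1
  · calc _ ≤ N ^ β / β := sum_range_rpow_le_of_le_one hβ0 hβ1 N
      _ ≤ 2 / β * N ^ β := by
        rw [div_mul_eq_mul_div]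
        gcongr
        linarith [rpow_nonneg N.cast_nonneg β]
  · calc _ ≤ ∑ _n ∈ range N, (N : ℝ) ^ (β - 1) := by
          gcongr with n hn
          exact_mod_cast mem_range.1 hn
      _ = N ^ β := by
        rcases N.eq_zero_or_pos with rfl | hN
        · simp [zero_rpow hβ0.ne']
        rw [sum_const, card_range, nsmul_eq_mul, rpow_sub_one (by positivity)]
        field_simp
      _ ≤ 2 / β * N ^ β :=
        le_mul_of_one_le_left (by positivity) ((one_le_div hβ0).2 hβ2)

end PowerSums

section OctantShells

variable {d : ℕ}

def octantShell (d n : ℕ) : Finset (Fin d → ℤ) :=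
  (Fintype.piFinset fun _ => Icc (0 : ℤ) n).filter fun k => l1Z k = n

def octantBall (d N : ℕ) : Finset (Fin d → ℤ) :=
  (range (N + 1)).biUnion (octantShell d)

lemma abs_le_l1Z (k : Fin d → ℤ) (i : Fin d) : |(k i : ℝ)| ≤ l1Z k :=
  single_le_sum (f := fun i => |(k i : ℝ)|) (fun _ _ => abs_nonneg _) (mem_univ i)

lemma mem_octantShell {n : ℕ} {k : Fin d → ℤ} :
    k ∈ octantShell d n ↔ (∀ i, 0 ≤ k i) ∧ l1Z k = n := by
  simp only [octantShell, mem_filter, Fintype.mem_piFinset, mem_Icc, forall_and]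
  refine ⟨fun h => ⟨h.1.1, h.2⟩, fun h => ⟨⟨h.1, fun i => ?_⟩, h.2⟩⟩
  have := (le_abs_self _).trans ((abs_le_l1Z k i).trans h.2.le)
  exact_mod_cast this

lemma mem_octantBall {N : ℕ} {k : Fin d → ℤ} :
    k ∈ octantBall d N ↔ (∀ i, 0 ≤ k i) ∧ l1Z k ≤ N := by
  simp only [octantBall, mem_biUnion, mem_range, mem_octantShell, Nat.lt_succ_iff]
  constructor
  · rintro ⟨n, hn, hk, hl⟩
    exact ⟨hk, hl ▸ by exact_mod_cast hn⟩
  · rintro ⟨hk, hl⟩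
    rw [l1Z_eq_natCast] at hl ⊢
    exact ⟨_, by exact_mod_cast hl, hk, rfl⟩

lemma pairwiseDisjoint_octantShell (s : Finset ℕ) :
    (s : Set ℕ).PairwiseDisjoint (octantShell d) := by
  intro a _ b _ hab
  refine disjoint_left.2 fun k ha hb => hab ?_
  exact_mod_cast (mem_octantShell.1 ha).2.symm.trans (mem_octantShell.1 hb).2

/-- A point of a shell is determined by its first `d` coordinates. -/
lemma card_octantShell_succ_le (d n : ℕ) : #(octantShell (d + 1) n) ≤ (n + 1) ^ d := by
  calc #(octantShell (d + 1) n)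
      ≤ #(Fintype.piFinset fun _ : Fin d => Icc (0 : ℤ) n) := by
        refine card_le_card_of_injOn Fin.init (fun k hk => ?_) fun k hk k' hk' h => ?_
        · rw [mem_coe, octantShell, mem_filter, Fintype.mem_piFinset] at hk
          rw [mem_coe, Fintype.mem_piFinset]
          exact fun i => hk.1 i.castSucc
        · obtain ⟨hk0, hkn⟩ := mem_octantShell.1 hk
          obtain ⟨hk0', hkn'⟩ := mem_octantShell.1 hk'
          have hinit (i : Fin d) : k i.castSucc = k' i.castSucc := congrFun h i
          have hlast : |(k (Fin.last d) : ℝ)| = |(k' (Fin.last d) : ℝ)| := by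
            have hsplit := hkn.trans hkn'.symm
            simp only [l1Z, Fin.sum_univ_castSucc, hinit] at hsplit
            linarith
          rw [abs_of_nonneg (by exact_mod_cast hk0 _), abs_of_nonneg (by exact_mod_cast hk0' _)]
            at hlast
          rw [← Fin.snoc_init_self k, ← Fin.snoc_init_self k', h, (Int.cast_injective hlast :)]
    _ = (n + 1) ^ d := by simp

lemma card_octantShell_le (hd : 1 ≤ d) (n : ℕ) : #(octantShell d n) ≤ (n + 1) ^ (d - 1) := by
  obtain ⟨d, rfl⟩ := Nat.exists_eq_add_of_le' hd
  exact card_octantShell_succ_le d n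

end OctantShells

lemma rpow_le_mul_rpow_of_le_of_le {x y c p q : ℝ} (hx : 0 < x) (hc : 1 ≤ c) (hxy : x ≤ y)
    (hyx : y ≤ c * x) (hpq : |p| ≤ q) : x ^ p ≤ c ^ q * y ^ p := by
  have hy : 0 < y := hx.trans_le hxy
  rcases le_or_gt 0 p with hp | hp
  · calc x ^ p ≤ y ^ p := rpow_le_rpow hx.le hxy hp
      _ ≤ c ^ q * y ^ p :=
        le_mul_of_one_le_left (by positivity) (one_le_rpow hc ((abs_nonneg p).trans hpq))
  · calc x ^ p = c ^ (-p) * (c * x) ^ p := by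
          rw [mul_rpow (by positivity) hx.le, rpow_neg (by positivity), inv_mul_cancel_left₀
            (rpow_pos_of_pos (by positivity) p).ne']
      _ ≤ c ^ q * y ^ p :=
        mul_le_mul (rpow_le_rpow_of_exponent_le hc (by rwa [abs_of_neg hp] at hpq))
          (rpow_le_rpow_of_nonpos hy hyx hp.le) (by positivity) (by positivity)

section LatticeSums

variable {d : ℕ} {β : ℝ}

lemma sum_octantShell_japZ_rpow_le (hd : 1 ≤ d) (hβ0 : 0 < β) (hβ2 : β ≤ 2) (n : ℕ) :
    ∑ k ∈ octantShell d n, japZ k ^ (β - d) ≤ (√d + 1) ^ d * ((n : ℝ) + 1) ^ (β - 1) := by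
  have hd1 : (1 : ℝ) ≤ d := by exact_mod_cast hd
  have hpoint : ∀ k ∈ octantShell d n,
      japZ k ^ (β - d) ≤ (√d + 1) ^ d * ((n : ℝ) + 1) ^ (β - d) := by
    intro k hk
    have hl : l1Z k = n := (mem_octantShell.1 hk).2
    rw [← rpow_natCast (√d + 1)]
    refine rpow_le_mul_rpow_of_le_of_le (japZ_pos k) (by simp) ?_ ?_ ?_
    · simpa [hl] using japZ_le_l1Z_add_one k
    · simpa [hl] using l1Z_add_one_le k
    · rw [abs_le]; constructor <;> linarith
  calc ∑ k ∈ octantShell d n, japZ k ^ (β - d)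
      ≤ #(octantShell d n) • ((√d + 1) ^ d * ((n : ℝ) + 1) ^ (β - d)) :=
        sum_le_card_nsmul _ _ _ hpoint
    _ ≤ ((n : ℝ) + 1) ^ (d - 1) * ((√d + 1) ^ d * ((n : ℝ) + 1) ^ (β - d)) := by
        rw [nsmul_eq_mul]
        gcongr
        exact_mod_cast card_octantShell_le hd n
    _ = (√d + 1) ^ d * ((n : ℝ) + 1) ^ (β - 1) := by
        rw [← rpow_natCast, Nat.cast_sub hd, mul_left_comm, ← rpow_add (by positivity),
          Nat.cast_one, sub_add_sub_cancel']

lemma sum_octantBall_japZ_rpow_le (hd : 1 ≤ d) (hβ0 : 0 < β) (hβ2 : β ≤ 2) (N : ℕ) :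
    ∑ k ∈ octantBall d N, japZ k ^ (β - d) ≤ 2 * (√d + 1) ^ d / β * ((N : ℝ) + 1) ^ β := by
  rw [octantBall, sum_biUnion (pairwiseDisjoint_octantShell _)]
  calc ∑ n ∈ range (N + 1), ∑ k ∈ octantShell d n, japZ k ^ (β - d)
      ≤ ∑ n ∈ range (N + 1), (√d + 1) ^ d * ((n : ℝ) + 1) ^ (β - 1) :=
        sum_le_sum fun n _ => sum_octantShell_japZ_rpow_le hd hβ0 hβ2 n
    _ ≤ (√d + 1) ^ d * (2 / β * ((N + 1 : ℕ) : ℝ) ^ β) := by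
        rw [← mul_sum]
        gcongr
        exact sum_range_rpow_le hβ0 hβ2 (N + 1)
    _ = 2 * (√d + 1) ^ d / β * ((N : ℝ) + 1) ^ β := by push_cast; ring

lemma sum_octantBall_japZ_rpow_le_japZ (hd : 1 ≤ d) (hβ0 : 0 < β) (hβ2 : β ≤ 2)
    {km : Fin d → ℤ} {N : ℕ} (hN : l1Z km = N) :
    ∑ k ∈ octantBall d N, japZ k ^ (β - d) ≤ 2 * (√d + 1) ^ (d + 2) / β * japZ km ^ β := by
  have hc : 1 ≤ √d + 1 := by linarith [sqrt_nonneg d]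
  calc ∑ k ∈ octantBall d N, japZ k ^ (β - d)
      ≤ 2 * (√d + 1) ^ d / β * ((N : ℝ) + 1) ^ β := sum_octantBall_japZ_rpow_le hd hβ0 hβ2 N
    _ ≤ 2 * (√d + 1) ^ d / β * ((√d + 1) ^ (2 : ℝ) * japZ km ^ β) := by
        gcongr
        calc ((N : ℝ) + 1) ^ β ≤ ((√d + 1) * japZ km) ^ β :=
              rpow_le_rpow (by positivity) (hN ▸ l1Z_add_one_le km) hβ0.le
          _ ≤ (√d + 1) ^ (2 : ℝ) * japZ km ^ β := by
              rw [mul_rpow (by positivity) (japZ_pos km).le]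
              exact mul_le_mul_of_nonneg_right (rpow_le_rpow_of_exponent_le hc hβ2)
                (rpow_nonneg (japZ_pos km).le β)
    _ = 2 * (√d + 1) ^ (d + 2) / β * japZ km ^ β := by
        rw [rpow_two]
        ring

end LatticeSums

section Region

variable {d n : ℕ} {km : Fin d → ℤ}

lemma region_eq_piFinset {N : ℕ} (hN : l1Z km = N) :
    region d n km = ↑(Fintype.piFinset fun _ : Fin n => octantBall d N) := by
  ext kk
  simp only [region, Set.mem_ofPred_eq, Fintype.coe_piFinset, Set.mem_pi, Set.mem_univ, mem_coe,
    mem_octantBall, hN, forall_const, forall_and]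

lemma tsum_indicator_region_eq {N : ℕ} (hN : l1Z km = N) (f : (Fin d → ℤ) → ℝ) (c : ℝ) :
    ∑' kk, (region d n km).indicator (fun kk => (∏ j, f (kk j)) * c) kk =
      (∑ k ∈ octantBall d N, f k) ^ n * c := by
  rw [region_eq_piFinset hN, ← sum_eq_tsum_indicator, ← sum_mul, sum_prod_piFinset, prod_const,
    card_univ, Fintype.card_fin]

lemma tsum_indicator_region_le (hd : 1 ≤ d) {β q : ℝ} (hβ0 : 0 < β) (hβ2 : β ≤ 2)
    (hq : n * β ≤ q) (km : Fin d → ℤ) :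
    ∑' kk, (region d n km).indicator
        (fun kk => (∏ j, japZ (kk j) ^ (β - d)) * japZ km ^ (-q)) kk ≤
      (2 * (√d + 1) ^ (d + 2) / β) ^ n := by
  set C := 2 * (√d + 1) ^ (d + 2) / β
  have hJ := japZ_pos km
  obtain ⟨N, hN⟩ : ∃ N : ℕ, l1Z km = N := ⟨_, l1Z_eq_natCast km⟩
  rw [tsum_indicator_region_eq hN (fun k => japZ k ^ (β - d))]
  calc (∑ k ∈ octantBall d N, japZ k ^ (β - d)) ^ n * japZ km ^ (-q)
      ≤ (C * japZ km ^ β) ^ n * japZ km ^ (-q) :=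
        mul_le_mul_of_nonneg_right (pow_le_pow_left₀
          (sum_nonneg fun k _ => rpow_nonneg (japZ_pos k).le _)
          (sum_octantBall_japZ_rpow_le_japZ hd hβ0 hβ2 hN) n) (rpow_nonneg hJ.le _)
    _ = C ^ n * japZ km ^ (n * β - q) := by
        rw [mul_pow, ← rpow_natCast (japZ km ^ β), ← rpow_mul hJ.le, mul_assoc,
          ← rpow_add hJ, mul_comm β, sub_eq_add_neg]
    _ ≤ C ^ n :=
        mul_le_of_le_one_right (by positivity)
          (rpow_le_one_of_one_le_of_nonpos (one_le_japZ km) (by linarith))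

end Region

lemma subcritical_exponent_bounds {m : ℕ} (hm : 2 ≤ m) {d σ : ℝ}
    (hσc : d / 2 - 2 / ((m : ℝ) - 1) ≤ σ) (hσ : σ < d / 2 - 2 / m) :
    0 < d - 2 * (σ + 2 / m) ∧ d - 2 * (σ + 2 / m) ≤ 2 ∧
      ((m - 1 : ℕ) : ℝ) * (d - 2 * (σ + 2 / m)) ≤ 4 / m := by
  have hm' : (2 : ℝ) ≤ m := by exact_mod_cast hm
  have hm1 : (m : ℝ) - 1 ≠ 0 := by linarith
  have hgap : ((m : ℝ) - 1) * (d - 2 * (σ + 2 / m)) ≤ 4 / m := by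
    have : d - 2 * (σ + 2 / m) ≤ 4 / ((m : ℝ) - 1) - 4 / m := by
      linarith [show 4 / ((m : ℝ) - 1) = 2 * (2 / ((m : ℝ) - 1)) by ring,
        show 4 / (m : ℝ) = 2 * (2 / m) by ring]
    calc ((m : ℝ) - 1) * (d - 2 * (σ + 2 / m))
        ≤ ((m : ℝ) - 1) * (4 / ((m : ℝ) - 1) - 4 / m) := by gcongr; linarith
      _ = 4 / m := by field_simp; ring
  have h4m : 4 / (m : ℝ) ≤ 2 := by rw [div_le_iff₀ (by linarith)]; linarith
  refine ⟨by linarith, ?_, by rwa [Nat.cast_pred (by omega)]⟩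
  nlinarith

/-- the key counting bound in the subcritical range
d/2 − 2/(m−1) ≤ σ < d/2 − 2/m:
Σ_{(k₁,…,k_{m−1}) ∈ (ℤ_I^d)^{m−1}, |k_j| ≤ |k_m|} ∏_j ⟨k_j⟩^{−2(σ+2/m)} ⟨k_m⟩^{−4/m}
≤ C^{m−1} (d − 2(σ+2/m))^{−(m−1)} ⟨k_m⟩^{(m−1)(d−2σ_c)−4}, where
σ_c = d/2 − 2/(m−1); in particular it is ≤ C^{m−1}|d − 2(σ+2/m)|^{−(m−1)}. -/
theorem stmt8 (d : ℕ) (hd : 1 ≤ d) :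
    ∃ C : ℝ, 0 < C ∧ ∀ (m : ℕ), 2 ≤ m → ∀ σ : ℝ,
      (d : ℝ)/2 - 2/((m : ℝ) - 1) ≤ σ → σ < (d : ℝ)/2 - 2/(m : ℝ) →
      ∀ km : Fin d → ℤ,
        (∑' kk : Fin (m-1) → Fin d → ℤ,
            (region d (m-1) km).indicator
              (fun kk => (∏ j, japZ (kk j) ^ (-(2 * (σ + 2/(m : ℝ))))) *
                japZ km ^ (-(4/(m : ℝ)))) kk) ≤
          C ^ (m - 1) * ((d : ℝ) - 2 * (σ + 2/(m : ℝ))) ^ (-((m : ℝ) - 1)) *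
            japZ km ^ (((m : ℝ) - 1) * ((d : ℝ) - 2 * ((d : ℝ)/2 - 2/((m : ℝ) - 1))) - 4) ∧
        (∑' kk : Fin (m-1) → Fin d → ℤ,
            (region d (m-1) km).indicator
              (fun kk => (∏ j, japZ (kk j) ^ (-(2 * (σ + 2/(m : ℝ))))) *
                japZ km ^ (-(4/(m : ℝ)))) kk) ≤
          C ^ (m - 1) * |(d : ℝ) - 2 * (σ + 2/(m : ℝ))| ^ (-((m : ℝ) - 1)) := by
  refine ⟨2 * (√d + 1) ^ (d + 2), by positivity, fun m hm σ hσc hσ km => ?_⟩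
  obtain ⟨hβ0, hβ2, hβm⟩ := subcritical_exponent_bounds hm hσc hσ
  set β := (d : ℝ) - 2 * (σ + 2 / m)
  have hbound : ∑' kk : Fin (m - 1) → Fin d → ℤ, (region d (m - 1) km).indicator
      (fun kk => (∏ j, japZ (kk j) ^ (-(2 * (σ + 2 / (m : ℝ))))) * japZ km ^ (-(4 / (m : ℝ)))) kk ≤
      (2 * (√d + 1) ^ (d + 2)) ^ (m - 1) * β ^ (-((m : ℝ) - 1)) := by
    rw [show -(2 * (σ + 2 / (m : ℝ))) = β - d by ring, rpow_neg hβ0.le,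
      ← Nat.cast_pred (by omega : 0 < m), rpow_natCast,
      ← div_eq_mul_inv, ← div_pow]
    exact tsum_indicator_region_le hd hβ0 hβ2 hβm km
  have hcrit : ((m : ℝ) - 1) * ((d : ℝ) - 2 * ((d : ℝ) / 2 - 2 / ((m : ℝ) - 1))) - 4 = 0 := by
    have : (m : ℝ) - 1 ≠ 0 := sub_ne_zero.2 (by exact_mod_cast (by omega : m ≠ 1))
    field_simp
    ring
  exact ⟨by rwa [hcrit, rpow_zero, mul_one], by rwa [abs_of_pos hβ0]⟩
end
end

section
/- (Support propagation for the iteration) Let m ≥ 2, ε₀ > 0, and let v⁰ = 0, v^{j+1}(t,ξ) = e^{−t|ξ|²} v₀(ξ) + ∫₀^t e^{−(t−τ)|ξ|²} (*^m v^j)(τ,ξ) dτ, where *^m v denotes the m-fold convolution of v with itself in ξ and supp v₀ ⊂ {ξ ∈ ℝ_I^d : |ξ| ≥ ε₀}. Then for all j ≥ 1, supp(v^{j+1}(t,·) − v^j(t,·)) ⊂ {ξ ∈ ℝ_I^d : |ξ| ≥ (1 + j(m−1))ε₀} for every t ≥ 0 (in particular ⊂ {|ξ| ≥ j(m−1)ε₀}).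 -/
open MeasureTheory ENNReal

noncomputable section

def l1 {d : ℕ} (ξ : Vd d) : ℝ := ∑ i, |ξ i|

/-- The m-fold self convolution *^m v: convPow d (m-1) v = v * ⋯ * v (m factors). -/
def convPow (d : ℕ) : ℕ → (Vd d → ℂ) → Vd d → ℂ
  | 0, g => g
  | n + 1, g => fun ξ => ∫ η, convPow d n g η * g (ξ - η)

namespace Stmt15Aux

/-- The set of nonnegative vectors with ℓ¹-norm at least `c`. -/
def S (d : ℕ) (c : ℝ) : Set (Vd d) := {ξ : Vd d | (∀ i, 0 ≤ ξ i) ∧ c ≤ l1 ξ}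

lemma S_anti {d : ℕ} {c c' : ℝ} (h : c' ≤ c) : S d c ⊆ S d c' := by
  intro ξ hξ
  exact ⟨hξ.1, le_trans h hξ.2⟩

lemma mem_add {d : ℕ} {r s : ℝ} {η ζ : Vd d} (hη : η ∈ S d r) (hζ : ζ ∈ S d s) :
    η + ζ ∈ S d (r + s) := by
  obtain ⟨h1, h2⟩ := hη
  obtain ⟨h3, h4⟩ := hζ
  have happ : ∀ i, (η + ζ) i = η i + ζ i := fun i => rfl
  refine ⟨fun i => by rw [happ i]; exact add_nonneg (h1 i) (h3 i), ?_⟩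
  have hl : l1 (η + ζ) = l1 η + l1 ζ := by
    simp only [l1]
    rw [← Finset.sum_add_distrib]
    refine Finset.sum_congr rfl fun i _ => ?_
    rw [happ i, abs_of_nonneg (h1 i), abs_of_nonneg (h3 i),
      abs_of_nonneg (add_nonneg (h1 i) (h3 i))]
  rw [hl]; exact add_le_add h2 h4

lemma mem_of_sub {d : ℕ} {r s : ℝ} {ξ η : Vd d} (hη : η ∈ S d r) (hζ : ξ - η ∈ S d s) :
    ξ ∈ S d (r + s) := by
  have := mem_add hη hζ
  rwa [add_sub_cancel] at this

lemma convPow_of_zero {d : ℕ} (n : ℕ) {g : Vd d → ℂ} (hg : ∀ ξ, g ξ = 0) :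
    ∀ ξ, convPow d n g ξ = 0 := by
  induction n with
  | zero => exact hg
  | succ n ih =>
      intro ξ
      show (∫ η, convPow d n g η * g (ξ - η)) = 0
      have : (fun η => convPow d n g η * g (ξ - η)) = fun _ => (0 : ℂ) := by
        funext η; rw [hg]; ring
      rw [this, integral_zero]

lemma convPow_supp {d : ℕ} {ε₀ : ℝ} (n : ℕ) {g : Vd d → ℂ}
    (hg : ∀ ξ, ξ ∉ S d ε₀ → g ξ = 0) :
    ∀ ξ, ξ ∉ S d (((n : ℝ) + 1) * ε₀) → convPow d n g ξ = 0 := by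
  induction n with
  | zero =>
      intro ξ hξ
      apply hg
      intro h
      exact hξ (by simpa using h)
  | succ n ih =>
      intro ξ hξ
      show (∫ η, convPow d n g η * g (ξ - η)) = 0
      have : (fun η => convPow d n g η * g (ξ - η)) = fun _ => (0 : ℂ) := by
        funext η
        by_cases hη : η ∈ S d (((n : ℝ) + 1) * ε₀)
        · by_cases hζ : ξ - η ∈ S d ε₀
          · exfalso
            apply hξ
            have := mem_of_sub hη hζ
            have harith : ((n : ℝ) + 1) * ε₀ + ε₀ = (((n : ℕ) + 1 : ℝ) + 1) * ε₀ := by ring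
            rw [harith] at this
            simpa using this
          · rw [hg _ hζ]; ring
        · rw [ih _ hη]; ring
      rw [this, integral_zero]

lemma convPow_diff {d : ℕ} {ε₀ c : ℝ} (n : ℕ) {a b : Vd d → ℂ}
    (ha : ∀ ξ, ξ ∉ S d ε₀ → a ξ = 0) (hb : ∀ ξ, ξ ∉ S d ε₀ → b ξ = 0)
    (hab : ∀ ξ, ξ ∉ S d c → a ξ = b ξ) :
    ∀ ξ, ξ ∉ S d (c + (n : ℝ) * ε₀) → convPow d n a ξ = convPow d n b ξ := by
  induction n with
  | zero =>
      intro ξ hξ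
      apply hab
      intro h
      exact hξ (by simpa using h)
  | succ n ih =>
      intro ξ hξ
      show (∫ η, convPow d n a η * a (ξ - η)) = ∫ η, convPow d n b η * b (ξ - η)
      congr 1
      funext η
      by_cases hd : convPow d n a η = convPow d n b η
      · rw [← hd]
        by_cases hz : convPow d n a η = 0
        · rw [hz]; ring
        · -- η ∈ S ((n+1) ε₀)
          have hη : η ∈ S d (((n : ℝ) + 1) * ε₀) := by
            by_contra hη
            exact hz (convPow_supp n ha η hη)
          have heq : a (ξ - η) = b (ξ - η) := by
            apply hab
            intro hζ
            apply hξ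
            have := mem_of_sub hη hζ
            have harith : ((n : ℝ) + 1) * ε₀ + c = c + (((n : ℕ) + 1 : ℝ)) * ε₀ := by ring
            rw [harith] at this
            simpa using this
          rw [heq]
      · -- η ∈ S (c + n ε₀)
        have hη : η ∈ S d (c + (n : ℝ) * ε₀) := by
          by_contra hη
          exact hd (ih η hη)
        have haz : a (ξ - η) = 0 := by
          apply ha
          intro hζ
          apply hξ
          have := mem_of_sub hη hζ
          have harith : c + (n : ℝ) * ε₀ + ε₀ = c + (((n : ℕ) + 1 : ℝ)) * ε₀ := by ring
          rw [harith] at this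
          simpa using this
        have hbz : b (ξ - η) = 0 := by
          apply hb
          intro hζ
          apply hξ
          have := mem_of_sub hη hζ
          have harith : c + (n : ℝ) * ε₀ + ε₀ = c + (((n : ℕ) + 1 : ℝ)) * ε₀ := by ring
          rw [harith] at this
          simpa using this
        rw [haz, hbz]; ring

end Stmt15Aux

/-- support propagation for the Duhamel iteration. If v⁰ = 0,
v^{j+1}(t,ξ) = e^{−t|ξ|²}v₀(ξ) + ∫₀^t e^{−(t−τ)|ξ|²}(*^m v^j)(τ,ξ)dτ, and
supp v₀ ⊂ {ξ ∈ ℝ_I^d : |ξ| ≥ ε₀}, then for all j ≥ 1 and t ≥ 0,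
supp(v^{j+1}(t,·) − v^j(t,·)) ⊂ {ξ ∈ ℝ_I^d : |ξ| ≥ (1 + j(m−1))ε₀}. -/
theorem stmt15 (d m : ℕ) (hm : 2 ≤ m) (ε₀ : ℝ) (hε : 0 < ε₀)
    (v₀ : Vd d → ℂ)
    (hsupp : Function.support v₀ ⊆ {ξ : Vd d | (∀ i, 0 ≤ ξ i) ∧ ε₀ ≤ l1 ξ})
    (v : ℕ → ℝ → Vd d → ℂ)
    (hv0 : ∀ t ξ, v 0 t ξ = 0)
    (hrec : ∀ j t ξ, v (j + 1) t ξ =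
      (Real.exp (-(t * ‖ξ‖ ^ 2)) : ℂ) * v₀ ξ +
        ∫ τ in Set.Ioc (0:ℝ) t,
          (Real.exp (-((t - τ) * ‖ξ‖ ^ 2)) : ℂ) * convPow d (m - 1) (v j τ) ξ) :
    ∀ j : ℕ, 1 ≤ j → ∀ t : ℝ, 0 ≤ t →
      Function.support (fun ξ => v (j + 1) t ξ - v j t ξ) ⊆
        {ξ : Vd d | (∀ i, 0 ≤ ξ i) ∧
          ((1 + j * (m - 1) : ℕ) : ℝ) * ε₀ ≤ l1 ξ} := by
  classical
  open Stmt15Aux in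
  -- v₀ vanishes off S ε₀
  have hv₀ : ∀ ξ, ξ ∉ S d ε₀ → v₀ ξ = 0 := by
    intro ξ hξ
    by_contra h
    exact hξ (hsupp h)
  -- each iterate vanishes off S ε₀
  have hviter : ∀ j t ξ, ξ ∉ S d ε₀ → v j t ξ = 0 := by
    intro j
    induction j with
    | zero => intro t ξ _; exact hv0 t ξ
    | succ j ih =>
        intro t ξ hξ
        rw [hrec]
        have hconv : ∀ τ : ℝ, convPow d (m - 1) (v j τ) ξ = 0 := by
          intro τ
          apply convPow_supp (m - 1) (fun ζ hζ => ih τ ζ hζ)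
          intro hmem
          apply hξ
          apply S_anti _ hmem
          have : (1 : ℝ) ≤ ((m - 1 : ℕ) : ℝ) + 1 := by
            have h : (1 : ℕ) ≤ m - 1 + 1 := by omega
            exact_mod_cast h
          nlinarith [hε.le]
        have hint : (fun τ => (Real.exp (-((t - τ) * ‖ξ‖ ^ 2)) : ℂ) *
            convPow d (m - 1) (v j τ) ξ) = fun _ => (0 : ℂ) := by
          funext τ; rw [hconv τ]; ring
        rw [hv₀ ξ hξ, hint]
        simp
  -- main pointwise claim
  have main : ∀ j : ℕ, 1 ≤ j → ∀ t ξ,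
      ξ ∉ S d (((1 + j * (m - 1) : ℕ) : ℝ) * ε₀) → v (j + 1) t ξ = v j t ξ := by
    intro j hj
    induction j with
    | zero => omega
    | succ j ih =>
        by_cases hj1 : j = 0
        · -- base case j+1 = 1
          subst hj1
          intro t ξ hξ
          rw [hrec, hrec]
          congr 1
          congr 1
          funext τ
          have h0 : convPow d (m - 1) (v 0 τ) ξ = 0 :=
            convPow_of_zero (m - 1) (hv0 τ) ξ
          have h1 : convPow d (m - 1) (v 1 τ) ξ = 0 := by
            apply convPow_supp (m - 1) (fun ζ hζ => hviter 1 τ ζ hζ)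
            intro hmem
            apply hξ
            have : (((m - 1 : ℕ) : ℝ) + 1) * ε₀ = ((1 + 1 * (m - 1) : ℕ) : ℝ) * ε₀ := by
              push_cast
              ring
            rwa [this] at hmem
          rw [h0, h1]
        · -- inductive step
          have hj' : 1 ≤ j := by omega
          intro t ξ hξ
          rw [hrec, hrec]
          congr 1
          congr 1
          funext τ
          congr 1
          apply convPow_diff (m - 1) (fun ζ hζ => hviter (j + 1) τ ζ hζ)
            (fun ζ hζ => hviter j τ ζ hζ) (ih hj' τ)
          intro hmem
          apply hξ
          have : ((1 + j * (m - 1) : ℕ) : ℝ) * ε₀ + ((m - 1 : ℕ) : ℝ) * ε₀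
              = ((1 + (j + 1) * (m - 1) : ℕ) : ℝ) * ε₀ := by
            push_cast
            ring
          rwa [this] at hmem
  -- conclude
  intro j hj t _ ξ hξ
  have hne : v (j + 1) t ξ - v j t ξ ≠ 0 := hξ
  by_contra hmem
  exact hne (by rw [main j hj t ξ hmem]; ring)
end
end
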